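/- Let n and k be positive integers and let a_1, ..., a_k be positive integers with a_1 + a_2 + ... + a_k = n. Then the multinomial coefficient n!/(a_1! a_2! ... a_k!) is at least n·(n-1)···(n-k+2), i.e. n!/(a_1!···a_k!) ≥ n!/(n-k+1)!. -/
import Mathlib

lemma fact_mul_fact_le (a b : ℕ) (ha : 1 ≤ a) (hb : 1 ≤ b) :
    Nat.factorial a * Nat.factorial b ≤ Nat.factorial (a + b - 1) := by
  have h1 : a ≤ a + b - 1 := by omega
  have key : (a + b - 1).choose a * a.factorial * (a + b - 1 - a).factorial
      = (a + b - 1).factorial := Nat.choose_mul_factorial_mul_factorial h1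
  have h2 : a + b - 1 - a = b - 1 := by omega
  rw [h2] at key
  have hsym : (a + b - 1).choose a = (a + b - 1).choose (b - 1) := by
    have : a + b - 1 - a = b - 1 := h2
    rw [← this, Nat.choose_symm h1]
  have hch : b ≤ (a + b - 1).choose (b - 1) := by
    have hmono : b.choose (b - 1) ≤ (a + b - 1).choose (b - 1) :=
      Nat.choose_le_choose _ (by omega)
    have : b.choose (b - 1) = b := by
      rw [← Nat.choose_symm (by omega : b - 1 ≤ b), Nat.sub_sub_self hb, Nat.choose_one_right]
    omega
  calc a.factorial * b.factorial = a.factorial * (b * (b - 1).factorial) := by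
        rw [← Nat.succ_pred_eq_of_pos hb]; simp [Nat.factorial_succ]
    _ ≤ a.factorial * ((a + b - 1).choose (b - 1) * (b - 1).factorial) := by
        exact Nat.mul_le_mul_left _ (Nat.mul_le_mul_right _ hch)
    _ = (a + b - 1).choose a * a.factorial * (b - 1).factorial := by rw [hsym]; ring
    _ = (a + b - 1).factorial := key

lemma prod_fact_le {ι : Type*} [DecidableEq ι] (a : ι → ℕ) (s : Finset ι)
    (hs : s.Nonempty) (ha : ∀ i ∈ s, 1 ≤ a i) :
    ∏ i ∈ s, Nat.factorial (a i) ≤ Nat.factorial (∑ i ∈ s, a i - (s.card - 1)) := by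
  induction hs using Finset.Nonempty.cons_induction with
  | singleton i => simp
  | cons i s hi hs ih =>
    have ha' : ∀ j ∈ s, 1 ≤ a j := fun j hj => ha j (Finset.mem_cons_of_mem hj)
    have hai : 1 ≤ a i := ha i (Finset.mem_cons_self i s)
    have hcard : s.card ≤ ∑ j ∈ s, a j := by
      calc s.card = ∑ _j ∈ s, 1 := by simp
        _ ≤ ∑ j ∈ s, a j := Finset.sum_le_sum ha'
    have hcpos : 1 ≤ s.card := hs.card_pos
    rw [Finset.prod_cons, Finset.sum_cons, Finset.card_cons]
    calc (a i).factorial * ∏ j ∈ s, (a j).factorial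
        ≤ (a i).factorial * (∑ j ∈ s, a j - (s.card - 1)).factorial :=
          Nat.mul_le_mul_left _ (ih ha')
      _ ≤ (a i + (∑ j ∈ s, a j - (s.card - 1)) - 1).factorial :=
          fact_mul_fact_le _ _ hai (by omega)
      _ = (a i + ∑ j ∈ s, a j - (s.card + 1 - 1)).factorial := by congr 1; omega

theorem multinomial_ge_falling_factorial (n k : ℕ) (hn : 0 < n) (hk : 0 < k)
    (a : Fin k → ℕ) (ha : ∀ i, 1 ≤ a i) (hsum : ∑ i, a i = n) :
    Nat.factorial n / ∏ i, Nat.factorial (a i) ≥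
      Nat.factorial n / Nat.factorial (n - k + 1) := by
  have hkn : k ≤ n := by
    calc k = ∑ _i : Fin k, 1 := by simp
      _ ≤ ∑ i, a i := Finset.sum_le_sum (fun i _ => ha i)
      _ = n := hsum
  have hne : (Finset.univ : Finset (Fin k)).Nonempty := by
    simpa [Finset.univ_nonempty_iff] using Fin.pos_iff_nonempty.mp hk
  have h := prod_fact_le a Finset.univ hne (fun i _ => ha i)
  rw [hsum, Finset.card_univ, Fintype.card_fin] at h
  have h2 : n - (k - 1) = n - k + 1 := by omega
  rw [h2] at h
  exact Nat.div_le_div_left h (Finset.prod_pos fun i _ => Nat.factorial_pos _)
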